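/- The family of (s₀)-sets is a σ-ideal: it contains all subsets of its members and is closed under countable unions. (The countable union case uses a fusion argument on perfect sets.) -/

import Mathlib

/-- A perfect set: nonempty, closed, without isolated points. -/
def IsPerfectSet (P : Set ℝ) : Prop := Perfect P ∧ P.Nonempty

/-- An (s)-set (Marczewski measurable set). -/
def IsSSet (A : Set ℝ) : Prop :=
  ∀ P : Set ℝ, IsPerfectSet P →
    ∃ P' : Set ℝ, IsPerfectSet P' ∧ P' ⊆ P ∧ (P' ⊆ A ∩ P ∨ P' ⊆ P \ A)

/-- An (s₀)-set (Marczewski null set). -/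
def IsS0Set (A : Set ℝ) : Prop :=
  ∀ P : Set ℝ, IsPerfectSet P →
    ∃ P' : Set ℝ, IsPerfectSet P' ∧ P' ⊆ P ∧ P' ∩ A = ∅

/-!
Given a perfect set `P` and (s₀)-sets `f n`, split `P` into two disjoint perfect pieces of
small diameter and shrink each so that it misses `f 0`; repeat inside each piece with `f 1`,
and so on. The resulting Cantor scheme induces a continuous injection of the Cantor space
into `P` whose range misses every `f n`, and that range is a perfect set.
-/

open Set Function Filter Topology CantorScheme PiNat
open scoped ENNReal

instance Pi.perfectSpace_of_infinite {ι β : Type*} [Infinite ι] [TopologicalSpace β]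
    [Nontrivial β] : PerfectSpace (ι → β) := by
  classical
  refine perfectSpace_iff_forall_not_isolated.2 fun x => ?_
  choose y hy using fun i => exists_ne (x i)
  refine mem_closure_iff_nhdsWithin_neBot.1
    (mem_closure_of_tendsto (f := fun i => update x i (y i)) (b := cofinite) ?_ ?_)
  · refine tendsto_pi_nhds.2 fun j => tendsto_const_nhds.congr' ?_
    filter_upwards [eventually_cofinite_ne j] with i hij
    rw [update_of_ne hij.symm]
  · exact Eventually.of_forall fun i h => hy i (by simpa using congr_fun h i)

theorem preperfect_range_of_continuous_of_injective {X Y : Type*} [TopologicalSpace X]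
    [PerfectSpace X] [TopologicalSpace Y] {F : X → Y} (hF : Continuous F) (hinj : Injective F) :
    Preperfect (range F) := by
  refine preperfect_iff_nhds.2 ?_
  rintro _ ⟨x, rfl⟩ U hU
  obtain ⟨x', hx'U, hx'x⟩ :=
    preperfect_iff_nhds.1 PerfectSpace.univ_preperfect x (mem_univ x) _ (hF.continuousAt hU)
  exact ⟨F x', ⟨hx'U.1, mem_range_self x'⟩, hinj.ne hx'x⟩

theorem perfect_range_of_continuous_of_injective {X Y : Type*} [TopologicalSpace X]
    [PerfectSpace X] [CompactSpace X] [TopologicalSpace Y] [T2Space Y] {F : X → Y}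
    (hF : Continuous F) (hinj : Injective F) : Perfect (range F) :=
  ⟨(isCompact_range hF).isClosed, preperfect_range_of_continuous_of_injective hF hinj⟩

theorem IsS0Set.mono {A B : Set ℝ} (hA : IsS0Set A) (hBA : B ⊆ A) : IsS0Set B := by
  intro P hP
  obtain ⟨P', hP', hP'P, hP'A⟩ := hA P hP
  exact ⟨P', hP', hP'P, subset_empty_iff.1 (hP'A ▸ inter_subset_inter_right P' hBA)⟩

theorem IsS0Set.exists_perfect_disjoint {A C : Set ℝ} (hA : IsS0Set A) (hC : Perfect C)
    (hne : C.Nonempty) : ∃ D, IsPerfectSet D ∧ D ⊆ C ∧ Disjoint D A := by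
  obtain ⟨D, hD, hDC, hDA⟩ := hA C ⟨hC, hne⟩
  exact ⟨D, hD, hDC, disjoint_iff_inter_eq_empty.2 hDA⟩

theorem IsS0Set.exists_split {A C : Set ℝ} (hA : IsS0Set A) (hC : IsPerfectSet C) {ε : ℝ≥0∞}
    (hε : 0 < ε) : ∃ D : Bool → Set ℝ, Pairwise (Disjoint on D) ∧
      ∀ b, IsPerfectSet (D b) ∧ D b ⊆ C ∧ Disjoint (D b) A ∧ Metric.ediam (D b) ≤ ε := by
  obtain ⟨C₀, C₁, ⟨hC₀, hne₀, hC₀C, hdiam₀⟩, ⟨hC₁, hne₁, hC₁C, hdiam₁⟩, hdisj⟩ :=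
    hC.1.small_diam_splitting hC.2 hε
  obtain ⟨D₀, hD₀, hD₀C, hD₀A⟩ := hA.exists_perfect_disjoint hC₀ hne₀
  obtain ⟨D₁, hD₁, hD₁C, hD₁A⟩ := hA.exists_perfect_disjoint hC₁ hne₁
  refine ⟨fun b => bif b then D₁ else D₀,
    pairwise_disjoint_on_bool.2 (hdisj.mono hD₀C hD₁C).symm, Bool.forall_bool.2 ⟨?_, ?_⟩⟩
  · exact ⟨hD₀, hD₀C.trans hC₀C, hD₀A, (Metric.ediam_mono hD₀C).trans hdiam₀⟩
  · exact ⟨hD₁, hD₁C.trans hC₁C, hD₁A, (Metric.ediam_mono hD₁C).trans hdiam₁⟩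

theorem CantorScheme.ClosureAntitone.exists_continuous_injective_mem {β α : Type*}
    [TopologicalSpace β] [DiscreteTopology β] [PseudoMetricSpace α] [CompleteSpace α]
    {D : List β → Set α} (hanti : ClosureAntitone D) (hdisj : CantorScheme.Disjoint D)
    (hdiam : VanishingDiam D) (hne : ∀ l, (D l).Nonempty) :
    ∃ F : (ℕ → β) → α, Continuous F ∧ Injective F ∧ ∀ x n, F x ∈ D (res x n) := by
  have htotal (x : ℕ → β) : x ∈ (inducedMap D).1 := by
    rw [hanti.map_of_vanishingDiam hdiam hne]
    exact mem_univ x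
  exact ⟨fun x => (inducedMap D).2 ⟨x, htotal x⟩, hdiam.map_continuous.comp (by fun_prop),
    fun x y hxy => congr_arg Subtype.val (hdisj.map_injective hxy), fun x => map_mem _⟩

def iterateSplit {α : Type*} (split : ℕ → α → Bool → α) (P : α) : List Bool → α
  | [] => P
  | b :: l => split l.length (iterateSplit split P l) b

theorem iterateSplit_res_succ {α : Type*} (split : ℕ → α → Bool → α) (P : α) (x : ℕ → Bool)
    (n : ℕ) :
    iterateSplit split P (res x (n + 1)) = split n (iterateSplit split P (res x n)) (x n) := by
  rw [res_succ, iterateSplit, res_length]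

theorem exists_continuous_injective_avoiding {f : ℕ → Set ℝ} (hf : ∀ n, IsS0Set (f n))
    {P : Set ℝ} (hP : IsPerfectSet P) : ∃ F : (ℕ → Bool) → ℝ, Continuous F ∧ Injective F ∧
      range F ⊆ P ∧ ∀ n, Disjoint (range F) (f n) := by
  have hε (n : ℕ) : (0 : ℝ≥0∞) < (n : ℝ≥0∞)⁻¹ := ENNReal.inv_pos.2 (ENNReal.natCast_ne_top n)
  choose! split hsplit_disj hsplit using
    fun n E (hE : IsPerfectSet E) => (hf n).exists_split hE (hε n)
  set D := iterateSplit split P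
  have hchild (x : ℕ → Bool) (n : ℕ) : D (res x (n + 1)) = split n (D (res x n)) (x n) :=
    iterateSplit_res_succ split P x n
  have hperf (l : List Bool) : IsPerfectSet (D l) := by
    induction l with
    | nil => exact hP
    | cons b l ih => exact (hsplit _ _ ih b).1
  have hanti : ClosureAntitone D :=
    CantorScheme.Antitone.closureAntitone (fun l b => (hsplit _ _ (hperf l) b).2.1)
      fun l => (hperf l).1.closed
  have hdisj : CantorScheme.Disjoint D := fun l => hsplit_disj _ _ (hperf l)
  have hdiam : VanishingDiam D := by
    intro x
    refine (tendsto_add_atTop_iff_nat 1).1 <| tendsto_of_tendsto_of_tendsto_of_le_of_le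
      tendsto_const_nhds ENNReal.tendsto_inv_nat_nhds_zero (fun _ => bot_le) fun n => ?_
    simpa only [hchild] using (hsplit _ _ (hperf (res x n)) (x n)).2.2.2
  obtain ⟨F, hF, hinj, hmem⟩ :=
    hanti.exists_continuous_injective_mem hdisj hdiam fun l => (hperf l).2
  refine ⟨F, hF, hinj, range_subset_iff.2 fun x => hmem x 0, fun n => disjoint_left.2 ?_⟩
  rintro _ ⟨x, rfl⟩
  have hx := hmem x (n + 1)
  rw [hchild] at hx
  exact disjoint_left.1 (hsplit _ _ (hperf (res x n)) (x n)).2.2.1 hx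

theorem s0_sigma_ideal :
    (∀ A B : Set ℝ, IsS0Set A → B ⊆ A → IsS0Set B) ∧
    (∀ f : ℕ → Set ℝ, (∀ n, IsS0Set (f n)) → IsS0Set (⋃ n, f n)) := by
  refine ⟨fun A B hA hBA => hA.mono hBA, fun f hf P hP => ?_⟩
  obtain ⟨F, hF, hinj, hFP, hFf⟩ := exists_continuous_injective_avoiding hf hP
  exact ⟨range F, ⟨perfect_range_of_continuous_of_injective hF hinj, range_nonempty F⟩, hFP,
    disjoint_iff_inter_eq_empty.1 (disjoint_iUnion_right.2 hFf)⟩
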